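/- arXiv:quant-ph/0304159 — 3 statements merged into one kernel-verified Lean document; each statement's English description precedes it below -/
import Mathlib

section
/- The set of effects (probabilistic-equivalence classes of events) of a locally finite phenomenological theory, with ⊕ defined via disjoint union within a measurement and unit the class of full measurements, forms a weak effect algebra, and the induced functions ω^e on equivalence classes are states whose collection separates points of the effect set. -/
/-- A locally finite phenomenological theory: a set of pairwise disjoint finite
measurements and a set of admissible states: `[0,1]`-valued functions on
outcomes summing to `1` on each measurement. -/
structure PhenTheory (X : Type*) where
  meas : Set (Finset X)
  disjoint : ∀ M ∈ meas, ∀ N ∈ meas, M ≠ N → Disjoint M N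
  states : Set (X → ℝ)
  nonneg : ∀ ω ∈ states, ∀ x, 0 ≤ ω x ∧ ω x ≤ 1
  sum_one : ∀ ω ∈ states, ∀ M ∈ meas, ∑ x ∈ M, ω x = 1

/-- An event: a subset of some measurement. -/
def Event {X : Type*} (P : PhenTheory X) : Type _ :=
  {a : Finset X // ∃ M ∈ P.meas, a ⊆ M}

/-- Probabilistic equivalence of events: equal probability in every state. -/
def eventSetoid {X : Type*} (P : PhenTheory X) : Setoid (Event P) where
  r a b := ∀ ω ∈ P.states, ∑ x ∈ a.1, ω x = ∑ x ∈ b.1, ω x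
  iseqv := ⟨fun _ _ _ => rfl, fun h ω hω => (h ω hω).symm,
    fun h₁ h₂ ω hω => (h₁ ω hω).trans (h₂ ω hω)⟩

/-- Effects: probabilistic-equivalence classes of events. -/
def Effect {X : Type*} (P : PhenTheory X) : Type _ := Quotient (eventSetoid P)

/-- A weak effect algebra: strong commutativity, weak associativity, unique
orthosupplements, and `a ⊕ 1` defined only for `a = 1'`. -/
structure WeakEffectAlgebra (E : Type*) where
  add : E → E → Option E
  one : E
  comm : ∀ a b, add a b = add b a
  wassoc : ∀ a b c ab bc l r, add a b = some ab → add b c = some bc →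
    add ab c = some l → add a bc = some r → l = r
  orth : ∀ a, ∃! b, add a b = some one
  one_max : ∀ a b, add a one = some b → add a one = some one

/-- A state on a weak effect algebra. -/
def IsWEAState {E : Type*} (A : WeakEffectAlgebra E) (ω : E → ℝ) : Prop :=
  (∀ a, ω a ∈ Set.Icc (0:ℝ) 1) ∧ ω A.one = 1 ∧
    ∀ a b c, A.add a b = some c → ω c = ω a + ω b

/-!
Every state `ω` induces a function `ω^e` on effects, and two effects are equal exactly when
all these functions agree on them. Each `ω^e` is additive along `⊕` and takes the value `1`
on the unit, so the axioms of a weak effect algebra reduce to identities between real numbers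
in `[0, 1]`: weak associativity is associativity of `+`, the orthosupplement of `a` is forced
to have probability `1 - ω^e a` and is realised by the complement of `a` in its measurement,
and `a ⊕ 1` forces `ω^e a = 0`, whence `a ⊕ 1 = 1`. The same separation property makes `⊕`
single-valued: all witnesses of `x ⊕ y` have the same probabilities.
-/

namespace PhenTheory

section Prob

variable {X : Type*} (P : PhenTheory X)

noncomputable def effectProb {ω : X → ℝ} (hω : ω ∈ P.states) : Effect P → ℝ :=
  Quotient.lift (fun a : Event P => ∑ x ∈ a.1, ω x) fun _ _ h => h ω hω

@[simp]
lemma effectProb_mk {ω : X → ℝ} (hω : ω ∈ P.states) (a : Event P) :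
    effectProb P hω (Quotient.mk _ a) = ∑ x ∈ a.1, ω x := rfl

lemma effect_eq_iff_forall_effectProb_eq {e₁ e₂ : Effect P} :
    e₁ = e₂ ↔ ∀ ω (hω : ω ∈ P.states), effectProb P hω e₁ = effectProb P hω e₂ := by
  refine ⟨fun h _ _ => h ▸ rfl, fun h => ?_⟩
  induction e₁ using Quotient.inductionOn
  induction e₂ using Quotient.inductionOn
  exact Quotient.sound h

lemma effectProb_mem_Icc {ω : X → ℝ} (hω : ω ∈ P.states) (e : Effect P) :
    effectProb P hω e ∈ Set.Icc (0 : ℝ) 1 := by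
  induction e using Quotient.inductionOn with | _ a =>
  obtain ⟨M, hM, haM⟩ := a.2
  have hnonneg : ∀ x, 0 ≤ ω x := fun x => (P.nonneg ω hω x).1
  refine ⟨Finset.sum_nonneg fun x _ => hnonneg x, ?_⟩
  calc ∑ x ∈ a.1, ω x ≤ ∑ x ∈ M, ω x :=
        Finset.sum_le_sum_of_subset_of_nonneg haM fun x _ _ => hnonneg x
    _ = 1 := P.sum_one ω hω M hM

def measEffect {M : Finset X} (hM : M ∈ P.meas) : Effect P :=
  Quotient.mk _ ⟨M, M, hM, Finset.Subset.refl M⟩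

lemma effectProb_measEffect {ω : X → ℝ} (hω : ω ∈ P.states) {M : Finset X}
    (hM : M ∈ P.meas) : effectProb P hω (P.measEffect hM) = 1 :=
  P.sum_one ω hω M hM

lemma measEffect_eq {M N : Finset X} (hM : M ∈ P.meas) (hN : N ∈ P.meas) :
    P.measEffect hM = P.measEffect hN :=
  (P.effect_eq_iff_forall_effectProb_eq).2 fun _ hω => by
    rw [effectProb_measEffect, effectProb_measEffect]

end Prob

section OrthoAdd

variable {X : Type*} [DecidableEq X] (P : PhenTheory X)

def IsOrthoSum (x y z : Effect P) : Prop :=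
  ∃ (a b : Event P) (M : Finset X) (hM : M ∈ P.meas) (ha : a.1 ⊆ M) (hb : b.1 ⊆ M),
    Disjoint a.1 b.1 ∧ x = Quotient.mk _ a ∧ y = Quotient.mk _ b ∧
    z = Quotient.mk _ ⟨a.1 ∪ b.1, M, hM, Finset.union_subset ha hb⟩

variable {P}

lemma IsOrthoSum.effectProb_eq {x y z : Effect P} (h : P.IsOrthoSum x y z) {ω : X → ℝ}
    (hω : ω ∈ P.states) : effectProb P hω z = effectProb P hω x + effectProb P hω y := by
  obtain ⟨a, b, M, hM, ha, hb, hd, rfl, rfl, rfl⟩ := h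
  exact Finset.sum_union hd

lemma IsOrthoSum.unique {x y z z' : Effect P} (h : P.IsOrthoSum x y z)
    (h' : P.IsOrthoSum x y z') : z = z' :=
  (P.effect_eq_iff_forall_effectProb_eq).2 fun _ hω => by
    rw [h.effectProb_eq hω, h'.effectProb_eq hω]

lemma IsOrthoSum.symm {x y z : Effect P} (h : P.IsOrthoSum x y z) : P.IsOrthoSum y x z := by
  obtain ⟨a, b, M, hM, ha, hb, hd, rfl, rfl, rfl⟩ := h
  exact ⟨b, a, M, hM, hb, ha, hd.symm, rfl, rfl,
    congrArg _ (Subtype.ext (Finset.union_comm _ _))⟩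

lemma exists_isOrthoSum_measEffect (x : Effect P) :
    ∃ y, ∃ M, ∃ hM : M ∈ P.meas, P.IsOrthoSum x y (P.measEffect hM) := by
  induction x using Quotient.inductionOn with | _ a =>
  obtain ⟨M, hM, haM⟩ := a.2
  let b : Event P := ⟨M \ a.1, M, hM, Finset.sdiff_subset⟩
  refine ⟨Quotient.mk _ b, M, hM, a, b, M, hM, haM, Finset.sdiff_subset,
    Finset.disjoint_sdiff, rfl, rfl, ?_⟩
  exact congrArg _ (Subtype.ext (Finset.union_sdiff_of_subset haM).symm)

variable (P) in
open Classical in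
noncomputable def orthoAdd (x y : Effect P) : Option (Effect P) :=
  if h : ∃ z, P.IsOrthoSum x y z then some h.choose else none

lemma orthoAdd_eq_some_iff {x y z : Effect P} :
    P.orthoAdd x y = some z ↔ P.IsOrthoSum x y z := by
  unfold orthoAdd
  split_ifs with hex
  · exact ⟨fun h => Option.some.inj h ▸ hex.choose_spec,
      fun h => congrArg some (hex.choose_spec.unique h)⟩
  · exact ⟨fun h => h.elim, fun h => absurd ⟨z, h⟩ hex⟩

lemma orthoAdd_comm (x y : Effect P) : P.orthoAdd x y = P.orthoAdd y x :=
  Option.ext fun _ => by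
    rw [orthoAdd_eq_some_iff, orthoAdd_eq_some_iff]
    exact ⟨IsOrthoSum.symm, IsOrthoSum.symm⟩

lemma orthoAdd_weak_assoc {x y z xy yz l r : Effect P} (hxy : P.orthoAdd x y = some xy)
    (hyz : P.orthoAdd y z = some yz) (hl : P.orthoAdd xy z = some l)
    (hr : P.orthoAdd x yz = some r) : l = r := by
  simp only [orthoAdd_eq_some_iff] at hxy hyz hl hr
  refine (P.effect_eq_iff_forall_effectProb_eq).2 fun ω hω => ?_
  rw [hl.effectProb_eq, hr.effectProb_eq, hxy.effectProb_eq, hyz.effectProb_eq, add_assoc]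

lemma existsUnique_orthoAdd_eq_measEffect (x : Effect P) {M : Finset X} (hM : M ∈ P.meas) :
    ∃! y, P.orthoAdd x y = some (P.measEffect hM) := by
  obtain ⟨y, N, hN, hy⟩ := exists_isOrthoSum_measEffect x
  rw [P.measEffect_eq hN hM] at hy
  refine ⟨y, orthoAdd_eq_some_iff.2 hy, fun y' hy' => ?_⟩
  refine (P.effect_eq_iff_forall_effectProb_eq).2 fun ω hω => ?_
  have h := hy.effectProb_eq hω
  have h' := (orthoAdd_eq_some_iff.1 hy').effectProb_eq hω
  linarith

lemma orthoAdd_measEffect {x z : Effect P} {M : Finset X} (hM : M ∈ P.meas)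
    (h : P.orthoAdd x (P.measEffect hM) = some z) :
    P.orthoAdd x (P.measEffect hM) = some (P.measEffect hM) := by
  suffices z = P.measEffect hM from this ▸ h
  refine (P.effect_eq_iff_forall_effectProb_eq).2 fun ω hω => ?_
  have hz := (orthoAdd_eq_some_iff.1 h).effectProb_eq hω
  have hx := (P.effectProb_mem_Icc hω x).1
  have hz₁ := (P.effectProb_mem_Icc hω z).2
  rw [effectProb_measEffect] at hz ⊢
  linarith

variable (P) in
noncomputable def weakEffectAlgebra {M : Finset X} (hM : M ∈ P.meas) :
    WeakEffectAlgebra (Effect P) where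
  add := P.orthoAdd
  one := P.measEffect hM
  comm := orthoAdd_comm
  wassoc _ _ _ _ _ _ _ := orthoAdd_weak_assoc
  orth x := existsUnique_orthoAdd_eq_measEffect x hM
  one_max _ _ := orthoAdd_measEffect hM

lemma isWEAState_effectProb {M : Finset X} (hM : M ∈ P.meas) {ω : X → ℝ}
    (hω : ω ∈ P.states) : IsWEAState (P.weakEffectAlgebra hM) (effectProb P hω) :=
  ⟨P.effectProb_mem_Icc hω, P.effectProb_measEffect hω hM,
    fun _ _ _ h => (orthoAdd_eq_some_iff.1 h).effectProb_eq hω⟩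

end OrthoAdd

end PhenTheory

/-- The effects of a locally finite phenomenological theory, with `⊕` induced
by disjoint union within a measurement and unit the class of full measurements,
form a weak effect algebra; the induced functions `ω^e` are states on it, and
their collection separates points of the effect set. -/
theorem effects_form_weak_effect_algebra (X : Type) [DecidableEq X]
    (P : PhenTheory X) (hne : ∃ M, M ∈ P.meas) :
    ∃ A : WeakEffectAlgebra (Effect P),
      (∀ (M : Finset X) (hM : M ∈ P.meas),
        A.one = Quotient.mk (eventSetoid P) ⟨M, M, hM, Finset.Subset.refl M⟩) ∧
      (∀ (a b : Event P) (M : Finset X), M ∈ P.meas → a.1 ⊆ M → b.1 ⊆ M →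
        Disjoint a.1 b.1 → ∃ c : Event P, c.1 = a.1 ∪ b.1 ∧
          A.add (Quotient.mk (eventSetoid P) a) (Quotient.mk (eventSetoid P) b)
            = some (Quotient.mk (eventSetoid P) c)) ∧
      (∀ x y : Effect P, (A.add x y).isSome →
        ∃ (a b : Event P) (M : Finset X), M ∈ P.meas ∧ a.1 ⊆ M ∧ b.1 ⊆ M ∧
          Disjoint a.1 b.1 ∧ x = Quotient.mk (eventSetoid P) a ∧
          y = Quotient.mk (eventSetoid P) b) ∧
      (∀ ω ∈ P.states, ∃ f : Effect P → ℝ,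
        (∀ a : Event P, f (Quotient.mk (eventSetoid P) a) = ∑ x ∈ a.1, ω x) ∧
        IsWEAState A f) ∧
      (∀ e₁ e₂ : Effect P, e₁ ≠ e₂ → ∃ ω ∈ P.states, ∃ f : Effect P → ℝ,
        (∀ a : Event P, f (Quotient.mk (eventSetoid P) a) = ∑ x ∈ a.1, ω x) ∧
        f e₁ ≠ f e₂) := by
  obtain ⟨M₀, hM₀⟩ := hne
  refine ⟨P.weakEffectAlgebra hM₀, fun M hM => P.measEffect_eq hM₀ hM, ?_, ?_,
    fun ω hω => ⟨P.effectProb hω, P.effectProb_mk hω, PhenTheory.isWEAState_effectProb hM₀ hω⟩, ?_⟩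
  · intro a b M hM ha hb hd
    exact ⟨⟨a.1 ∪ b.1, M, hM, Finset.union_subset ha hb⟩, rfl,
      PhenTheory.orthoAdd_eq_some_iff.2 ⟨a, b, M, hM, ha, hb, hd, rfl, rfl, rfl⟩⟩
  · intro x y h
    obtain ⟨z, hz⟩ := Option.isSome_iff_exists.1 h
    obtain ⟨a, b, M, hM, ha, hb, hd, hx, hy, -⟩ := PhenTheory.orthoAdd_eq_some_iff.1 hz
    exact ⟨a, b, M, hM, ha, hb, hd, hx, hy⟩
  · intro e₁ e₂ hne
    by_contra! h
    exact hne ((P.effect_eq_iff_forall_effectProb_eq).2 fun ω hω =>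
      h ω hω _ (P.effectProb_mk hω))
end

section
/- There exists a phenomenological theory whose effect algebra of probabilistic-equivalence classes fails strong associativity: there are effects x, y, z such that x ⊕ y and (x ⊕ y) ⊕ z are defined, but y ⊕ z is not defined. Hence the structure is a properly weak effect algebra, not an effect algebra. -/
/-- `SumIs P x y z`: the partial sum `x ⊕ y` of effects is defined via disjoint
witnessing events in a common measurement, with value `z`. -/
def SumIs {X : Type*} [DecidableEq X] (P : PhenTheory X) (x y z : Effect P) : Prop :=
  ∃ (a b : Event P) (M : Finset X), M ∈ P.meas ∧ a.1 ⊆ M ∧ b.1 ⊆ M ∧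
    Disjoint a.1 b.1 ∧ x = Quotient.mk (eventSetoid P) a ∧
    y = Quotient.mk (eventSetoid P) b ∧
    ∃ c : Event P, c.1 = a.1 ∪ b.1 ∧ z = Quotient.mk (eventSetoid P) c

/-- `x ⊕ y` is defined. -/
def DefinedSum {X : Type*} [DecidableEq X] (P : PhenTheory X) (x y : Effect P) : Prop :=
  ∃ z, SumIs P x y z


/-- indicator state -/
noncomputable def ind (s : Finset (Fin 6)) : Fin 6 → ℝ := fun i => if i ∈ s then 1 else 0

noncomputable def P6 : PhenTheory (Fin 6) where
  meas := {({0,1,2} : Finset (Fin 6)), ({3,4,5} : Finset (Fin 6))}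
  disjoint := by
    intro M hM N hN hne
    simp only [Set.mem_insert_iff, Set.mem_singleton_iff] at hM hN
    rcases hM with rfl | rfl <;> rcases hN with rfl | rfl <;>
      first | exact absurd rfl hne | decide
  states := {ind {0,3}, ind {1,3}, ind {2,4}, ind {2,5}}
  nonneg := by
    intro ω hω x
    simp only [Set.mem_insert_iff, Set.mem_singleton_iff] at hω
    rcases hω with rfl | rfl | rfl | rfl <;> unfold ind <;>
      constructor <;> split <;> norm_num
  sum_one := by
    intro ω hω M hM
    simp only [Set.mem_insert_iff, Set.mem_singleton_iff] at hω hM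
    rcases hω with rfl | rfl | rfl | rfl <;> rcases hM with rfl | rfl <;>
      norm_num [ind, Finset.sum_insert, Finset.mem_insert, Finset.mem_singleton] <;> decide

lemma memM : ({0,1,2} : Finset (Fin 6)) ∈ P6.meas := Or.inl rfl
lemma memN : ({3,4,5} : Finset (Fin 6)) ∈ P6.meas := Or.inr rfl

noncomputable def evA : Event P6 := ⟨{0}, ⟨_, memM, by decide⟩⟩
noncomputable def evB : Event P6 := ⟨{1}, ⟨_, memM, by decide⟩⟩
noncomputable def evAB : Event P6 := ⟨{0,1}, ⟨_, memM, by decide⟩⟩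
noncomputable def evC : Event P6 := ⟨{3}, ⟨_, memN, by decide⟩⟩
noncomputable def evD : Event P6 := ⟨{4}, ⟨_, memN, by decide⟩⟩
noncomputable def evCD : Event P6 := ⟨{3,4}, ⟨_, memN, by decide⟩⟩

/-- There is a phenomenological theory whose effect structure fails strong
associativity: effects `x, y, z` with `x ⊕ y` and `(x ⊕ y) ⊕ z` defined but
`y ⊕ z` undefined; so it is a properly weak effect algebra, not an effect
algebra. -/
theorem exists_properly_weak_effect_algebra :
    ∃ (X : Type) (_ : DecidableEq X) (P : PhenTheory X) (x y z xy xyz : Effect P),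
      SumIs P x y xy ∧ SumIs P xy z xyz ∧ ¬ DefinedSum P y z := by
  classical
  refine ⟨Fin 6, inferInstance, P6,
    Quotient.mk _ evA, Quotient.mk _ evB, Quotient.mk _ evD,
    Quotient.mk _ evC, Quotient.mk _ evCD, ?_, ?_, ?_⟩
  · -- x ⊕ y = xy : witnesses {0},{1} ⊆ {0,1,2}, union {0,1} ~ {3}
    refine ⟨evA, evB, {0,1,2}, memM, by decide, by decide, by decide, rfl, rfl,
      evAB, by decide, Quotient.sound ?_⟩
    intro ω hω
    rcases hω with rfl | rfl | rfl | rfl <;>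
      norm_num [evC, evAB, ind, Finset.sum_insert, Finset.mem_singleton] <;> decide
  · -- xy ⊕ z = xyz : witnesses {3},{4} ⊆ {3,4,5}
    exact ⟨evC, evD, {3,4,5}, memN, by decide, by decide, by decide, rfl, rfl,
      evCD, by decide, rfl⟩
  · -- y ⊕ z undefined
    rintro ⟨w, a, b, M, hM, haM, hbM, -, hy, hz, -⟩
    have ha : ∀ ω ∈ P6.states, ω 1 = ∑ x ∈ a.1, ω x := by
      have := Quotient.exact hy
      intro ω hω
      simpa [evB] using this ω hω
    have hb : ∀ ω ∈ P6.states, ω 4 = ∑ x ∈ b.1, ω x := by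
      have := Quotient.exact hz
      intro ω hω
      simpa [evD] using this ω hω
    have hC : ind {2,4} ∈ P6.states := Or.inr (Or.inr (Or.inl rfl))
    have hD : ind {2,5} ∈ P6.states := Or.inr (Or.inr (Or.inr rfl))
    have hA : ind {0,3} ∈ P6.states := Or.inl rfl
    have hB : ind {1,3} ∈ P6.states := Or.inr (Or.inl rfl)
    rcases hM with rfl | rfl
    · -- M = {0,1,2} : use states C, D on b
      have h1 : (1:ℝ) = ∑ x ∈ b.1, ind {2,4} x := by
        simpa [ind] using hb _ hC
      have h2 : (0:ℝ) = ∑ x ∈ b.1, ind {2,5} x := by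
        simpa [ind] using hb _ hD
      have heq : ∑ x ∈ b.1, ind {2,4} x = ∑ x ∈ b.1, ind {2,5} x := by
        refine Finset.sum_congr rfl fun x hx => ?_
        have hx' : x ∈ ({0,1,2} : Finset (Fin 6)) := hbM hx
        fin_cases hx' <;> simp [ind]
      rw [← h1, ← h2] at heq
      norm_num at heq
    · -- M = {3,4,5} : use states A, B on a
      have h1 : (0:ℝ) = ∑ x ∈ a.1, ind {0,3} x := by
        simpa [ind] using ha _ hA
      have h2 : (1:ℝ) = ∑ x ∈ a.1, ind {1,3} x := by
        simpa [ind] using ha _ hB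
      have heq : ∑ x ∈ a.1, ind {0,3} x = ∑ x ∈ a.1, ind {1,3} x := by
        refine Finset.sum_congr rfl fun x hx => ?_
        have hx' : x ∈ ({3,4,5} : Finset (Fin 6)) := haM hx
        fin_cases hx' <;> simp [ind]
      rw [← h1, ← h2] at heq
      norm_num at heq
end

section
/- Every state on the effect algebra of a finite-dimensional complex Hilbert space H (operators e with 0 ≤ e ≤ I) is of the form e ↦ tr(ρe) for a unique density operator ρ (positive semidefinite with trace 1). -/
open scoped ComplexOrder

/-- Quantum effects on a `d`-dimensional complex Hilbert space: operators `e`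
with `0 ≤ e ≤ I` in the Loewner order, modelled as matrices. -/
def QEffect (d : ℕ) : Type :=
  {e : Matrix (Fin d) (Fin d) ℂ // e.PosSemidef ∧ (1 - e).PosSemidef}

/-- A (convex) state on the quantum effect algebra: `[0,1]`-valued, additive
when the sum of effects is again an effect, `1` on the identity, and
homogeneous under scalars in `[0,1]`. -/
def IsQState {d : ℕ} (ω : QEffect d → ℝ) : Prop :=
  (∀ e, ω e ∈ Set.Icc (0:ℝ) 1) ∧
  (∀ e f g : QEffect d, g.1 = e.1 + f.1 → ω g = ω e + ω f) ∧
  (∀ e : QEffect d, e.1 = 1 → ω e = 1) ∧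
  (∀ (c : ℝ), c ∈ Set.Icc (0:ℝ) 1 →
    ∀ e f : QEffect d, f.1 = (c : ℂ) • e.1 → ω f = c * ω e)

/-!
A state is additive and homogeneous on effects, so writing a positive semidefinite matrix as
`a = c • e` with `c > 0` and `e` an effect extends it to an additive, positively homogeneous
functional on the positive semidefinite cone. Every Hermitian matrix is a difference of two
positive semidefinite ones, so the functional extends to a real-linear one on Hermitian matrices,
and then to a complex-linear one on all matrices. Since the trace pairing is nondegenerate, this
functional is `M ↦ tr (ρ M)`; its positivity makes `ρ` positive semidefinite, its value on `1`
gives `tr ρ = 1`, and `ρ` is unique because effects span all matrices.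
-/

open Filter Matrix
open scoped ComplexOrder ComplexStarModule MatrixOrder Matrix.Norms.L2Operator

section ConeExtension

variable {𝕜 V W : Type*} [Field 𝕜] [LinearOrder 𝕜] [IsStrictOrderedRing 𝕜]
  [AddCommGroup V] [Module 𝕜 V] [AddCommGroup W] [Module 𝕜 W]

/-- The extension is `L (x - y) = f x - f y` for `x, y ∈ C`, well defined by additivity of `f`. -/
theorem ConvexCone.IsReproducing.exists_linearMap_eqOn {C : ConvexCone 𝕜 V}
    (hC : C.IsReproducing) (f : V → W) (hadd : ∀ x ∈ C, ∀ y ∈ C, f (x + y) = f x + f y)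
    (hsmul : ∀ c : 𝕜, 0 < c → ∀ x ∈ C, f (c • x) = c • f x) :
    ∃ L : V →ₗ[𝕜] W, Set.EqOn L f C := by
  have well_defined : ∀ x ∈ C, ∀ y ∈ C, ∀ x' ∈ C, ∀ y' ∈ C,
      x - y = x' - y' → f x - f y = f x' - f y' := by
    intro x hx y hy x' hx' y' hy' h
    rw [sub_eq_sub_iff_add_eq_add] at h ⊢
    rw [← hadd x hx y' hy', ← hadd x' hx' y hy, h]
  choose p hp q hq hpq using fun v => Set.mem_sub.mp (hC.sub_eq_univ ▸ Set.mem_univ v)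
  set L : V → W := fun v => f (p v) - f (q v)
  have L_sub : ∀ x ∈ C, ∀ y ∈ C, L (x - y) = f x - f y := fun x hx y hy =>
    well_defined _ (hp _) _ (hq _) x hx y hy (hpq _)
  have L_repr : ∀ v, L v = f (p v) - f (q v) := fun _ => rfl
  refine ⟨{ toFun := L, map_add' := fun v w => ?_, map_smul' := fun c v => ?_ }, fun x hx => ?_⟩
  · conv_lhs => rw [← hpq v, ← hpq w, sub_add_sub_comm]
    rw [L_sub _ (C.add_mem (hp v) (hp w)) _ (C.add_mem (hq v) (hq w)),
      hadd _ (hp v) _ (hp w), hadd _ (hq v) _ (hq w), L_repr v, L_repr w]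
    abel
  · rcases lt_trichotomy c 0 with hc | rfl | hc
    · have hc' : 0 < -c := neg_pos.mpr hc
      conv_lhs => rw [← hpq v, ← neg_neg c, neg_smul, smul_sub, neg_sub]
      rw [L_sub _ (C.smul_mem hc' (hq v)) _ (C.smul_mem hc' (hp v)),
        hsmul _ hc' _ (hq v), hsmul _ hc' _ (hp v), L_repr v, RingHom.id_apply,
        neg_smul, neg_smul, smul_sub]
      abel
    · rw [zero_smul, RingHom.id_apply, zero_smul, ← sub_self (p 0), L_sub _ (hp 0) _ (hp 0),
        sub_self]
    · conv_lhs => rw [← hpq v, smul_sub]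
      rw [L_sub _ (C.smul_mem hc (hp v)) _ (C.smul_mem hc (hq v)),
        hsmul _ hc _ (hp v), hsmul _ hc _ (hq v), L_repr v, RingHom.id_apply, smul_sub]
  · have := L_sub _ (C.add_mem hx (hq x)) _ (hq x)
    rwa [add_sub_cancel_right, hadd _ hx _ (hq x), add_sub_cancel_right] at this

end ConeExtension

namespace Matrix

variable {K n : Type*}

def posSemidefCone : ConvexCone ℝ (selfAdjoint (Matrix n n ℂ)) where
  carrier := {h | (h : Matrix n n ℂ).PosSemidef}
  smul_mem' _ hc _ hh := hh.smul hc.le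
  add_mem' _ hh _ hk := hh.add hk

@[simp]
theorem mem_posSemidefCone {h : selfAdjoint (Matrix n n ℂ)} :
    h ∈ posSemidefCone ↔ (h : Matrix n n ℂ).PosSemidef :=
  Iff.rfl

variable [Fintype n] [DecidableEq n]

theorem exists_eq_trace_mul [Field K] (φ : Module.Dual K (Matrix n n K)) :
    ∃ ρ : Matrix n n K, ∀ M, φ M = (ρ * M).trace := by
  let B : LinearMap.BilinForm K (Matrix n n K) :=
    (LinearMap.mul K (Matrix n n K)).compr₂ (traceLinearMap n K K)
  have hB : B.Nondegenerate :=
    ⟨fun ρ h => ext_iff_trace_mul_right.mpr fun M => by simpa [B] using h M,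
      fun M h => ext_iff_trace_mul_left.mpr fun ρ => by simpa [B] using h ρ⟩
  exact ⟨(B.toDual hB).symm φ, fun M =>
    (LinearMap.BilinForm.apply_toDual_symm_apply (B := B) (hB := hB) φ M).symm⟩

/-- Over `ℂ` a nonnegative quadratic form is automatically real, so the matrix is Hermitian. -/
theorem posSemidef_of_dotProduct_mulVec_nonneg {A : Matrix n n ℂ}
    (hA : ∀ x, 0 ≤ star x ⬝ᵥ A *ᵥ x) : A.PosSemidef := by
  rw [← isPositive_toEuclideanLin_iff, LinearMap.isPositive_iff_complex]
  intro x
  have hx := hA x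
  have hq : x.ofLp ⬝ᵥ star (A *ᵥ x.ofLp) = star x.ofLp ⬝ᵥ A *ᵥ x.ofLp := by
    rw [dotProduct_comm, star_dotProduct, (IsSelfAdjoint.of_nonneg hx).star_eq]
  simp only [EuclideanSpace.inner_eq_star_dotProduct, toLpLin_apply, hq, RCLike.re_to_complex]
  exact ⟨Complex.ext rfl (Complex.nonneg_iff.mp hx).2, (Complex.nonneg_iff.mp hx).1⟩

theorem IsHermitian.eventually_posSemidef_add_smul_one {A : Matrix n n ℂ} (hA : A.IsHermitian) :
    ∀ᶠ c : ℝ in atTop, (A + (c : ℂ) • 1).PosSemidef := by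
  filter_upwards [eventually_ge_atTop ‖A‖] with c hc
  have hnorm : (A + (‖A‖ : ℂ) • 1).PosSemidef := by
    simpa [le_iff, Algebra.algebraMap_eq_smul_one, ← Complex.coe_smul, add_comm] using
      IsSelfAdjoint.neg_algebraMap_norm_le_self (A := Matrix n n ℂ) hA.isSelfAdjoint
  have hsplit : A + (c : ℂ) • 1 = (A + (‖A‖ : ℂ) • 1) + ((c - ‖A‖ : ℝ) : ℂ) • 1 := by
    push_cast; rw [sub_smul]; abel
  rw [hsplit]
  refine hnorm.add ?_
  rw [Complex.coe_smul]
  exact PosSemidef.one.smul (sub_nonneg.mpr hc)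

abbrev IsEffect (a : Matrix n n ℂ) : Prop := a.PosSemidef ∧ (1 - a).PosSemidef

theorem PosSemidef.eventually_isEffect_inv_smul {a : Matrix n n ℂ} (ha : a.PosSemidef) :
    ∀ᶠ c : ℝ in atTop, IsEffect ((c : ℂ)⁻¹ • a) := by
  filter_upwards [ha.1.neg.eventually_posSemidef_add_smul_one, eventually_gt_atTop 0]
    with c hc hc0
  have hinv : (0 : ℝ) ≤ c⁻¹ := inv_nonneg.mpr hc0.le
  have hsub : 1 - (c : ℂ)⁻¹ • a = ((c⁻¹ : ℝ) : ℂ) • (-a + (c : ℂ) • 1) := by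
    rw [smul_add, smul_smul, Complex.ofReal_inv, inv_mul_cancel₀ (by exact_mod_cast hc0.ne'),
      one_smul, smul_neg, neg_add_eq_sub]
  refine ⟨?_, ?_⟩
  · rw [← Complex.ofReal_inv, Complex.coe_smul]
    exact ha.smul hinv
  · rw [hsub, Complex.coe_smul]
    exact hc.smul hinv

theorem span_isEffect_eq_top : Submodule.span ℂ {a : Matrix n n ℂ | IsEffect a} = ⊤ := by
  set S := Submodule.span ℂ {a : Matrix n n ℂ | IsEffect a}
  have mem_of_posSemidef : ∀ a : Matrix n n ℂ, a.PosSemidef → a ∈ S := fun a ha => by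
    obtain ⟨c, he, hc⟩ := (ha.eventually_isEffect_inv_smul.and (eventually_gt_atTop 0)).exists
    have : a = (c : ℂ) • ((c : ℂ)⁻¹ • a) := by
      rw [smul_smul, mul_inv_cancel₀ (by exact_mod_cast hc.ne'), one_smul]
    rw [this]
    exact S.smul_mem _ (Submodule.subset_span he)
  have mem_of_isHermitian : ∀ h : Matrix n n ℂ, h.IsHermitian → h ∈ S := fun h hh => by
    obtain ⟨c, hc, hc0⟩ :=
      (hh.eventually_posSemidef_add_smul_one.and (eventually_ge_atTop 0)).exists
    rw [← add_sub_cancel_right h ((c : ℂ) • 1)]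
    refine S.sub_mem (mem_of_posSemidef _ hc) (mem_of_posSemidef _ ?_)
    rw [Complex.coe_smul]
    exact PosSemidef.one.smul hc0
  refine eq_top_iff.mpr fun M _ => ?_
  rw [← realPart_add_I_smul_imaginaryPart M]
  exact S.add_mem (mem_of_isHermitian _ (ℜ M).2.isHermitian)
    (S.smul_mem _ (mem_of_isHermitian _ (ℑ M).2.isHermitian))

theorem ext_of_trace_mul_isEffect {ρ σ : Matrix n n ℂ}
    (h : ∀ a, IsEffect a → (ρ * a).trace = (σ * a).trace) : ρ = σ := by
  have := LinearMap.ext_on (f := traceLinearMap n ℂ ℂ ∘ₗ LinearMap.mulLeft ℂ ρ)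
    (g := traceLinearMap n ℂ ℂ ∘ₗ LinearMap.mulLeft ℂ σ) span_isEffect_eq_top
    fun a ha => by simpa using h a ha
  exact ext_iff_trace_mul_right.mpr fun M => by simpa using LinearMap.congr_fun this M

theorem isReproducing_posSemidefCone : (posSemidefCone (n := n)).IsReproducing := by
  refine ConvexCone.IsReproducing.of_univ_subset fun h _ => ?_
  obtain ⟨c, hc, hc0⟩ :=
    (h.2.isHermitian.eventually_posSemidef_add_smul_one.and (eventually_ge_atTop 0)).exists
  refine ⟨h + c • 1, ?_, c • 1, ?_, add_sub_cancel_right h _⟩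
  · simpa [← Complex.coe_smul] using hc
  · simpa using PosSemidef.one.smul hc0

end Matrix

variable {d : ℕ}

open Classical in
/-- `a = c • e` with `c > 0` and `e` an effect is sent to `c * ω e`; matrices not of this form
get the junk value `0`. -/
noncomputable def psdExtension (ω : QEffect d → ℝ) (a : Matrix (Fin d) (Fin d) ℂ) : ℝ :=
  if h : ∃ p : ℝ × QEffect d, 0 < p.1 ∧ a = (p.1 : ℂ) • p.2.1 then
    h.choose.1 * ω h.choose.2
  else 0

namespace IsQState

variable {ω : QEffect d → ℝ}

theorem nonneg (hω : IsQState ω) (e : QEffect d) : 0 ≤ ω e := (hω.1 e).1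

theorem map_add (hω : IsQState ω) {e f g : QEffect d} (h : g.1 = e.1 + f.1) :
    ω g = ω e + ω f :=
  hω.2.1 e f g h

theorem map_one (hω : IsQState ω) {e : QEffect d} (h : e.1 = 1) : ω e = 1 := hω.2.2.1 e h

theorem map_smul (hω : IsQState ω) {c : ℝ} (hc : c ∈ Set.Icc (0 : ℝ) 1) {e f : QEffect d}
    (h : f.1 = (c : ℂ) • e.1) : ω f = c * ω e :=
  hω.2.2.2 c hc e f h

theorem mul_eq_mul_of_smul_eq (hω : IsQState ω) {c c' : ℝ} (hc : 0 < c) (hc' : 0 < c')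
    {e e' : QEffect d} (h : (c : ℂ) • e.1 = (c' : ℂ) • e'.1) : c * ω e = c' * ω e' := by
  wlog hle : c ≤ c' generalizing c c' e e'
  · exact (this hc' hc h.symm (le_of_not_ge hle)).symm
  have he' : e'.1 = ((c / c' : ℝ) : ℂ) • e.1 := by
    rw [Complex.ofReal_div, div_eq_inv_mul, mul_smul, h, inv_smul_smul₀ (by exact_mod_cast hc'.ne')]
  rw [hω.map_smul ⟨div_nonneg hc.le hc'.le, (div_le_one hc').mpr hle⟩ he']
  field_simp

theorem psdExtension_eq (hω : IsQState ω) {a : Matrix (Fin d) (Fin d) ℂ} {c : ℝ} (hc : 0 < c)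
    (e : QEffect d) (h : a = (c : ℂ) • e.1) : psdExtension ω a = c * ω e := by
  have hex : ∃ p : ℝ × QEffect d, 0 < p.1 ∧ a = (p.1 : ℂ) • p.2.1 := ⟨(c, e), hc, h⟩
  rw [psdExtension, dif_pos hex]
  exact hω.mul_eq_mul_of_smul_eq hex.choose_spec.1 hc (hex.choose_spec.2.symm.trans h)

theorem psdExtension_effect (hω : IsQState ω) (e : QEffect d) : psdExtension ω e.1 = ω e := by
  rw [hω.psdExtension_eq one_pos e (by rw [Complex.ofReal_one, one_smul]), one_mul]

theorem psdExtension_nonneg (hω : IsQState ω) (a : Matrix (Fin d) (Fin d) ℂ) :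
    0 ≤ psdExtension ω a := by
  rw [psdExtension]
  split_ifs with h
  · exact mul_nonneg h.choose_spec.1.le (hω.nonneg _)
  · rfl

theorem psdExtension_add (hω : IsQState ω) {a b : Matrix (Fin d) (Fin d) ℂ}
    (ha : a.PosSemidef) (hb : b.PosSemidef) :
    psdExtension ω (a + b) = psdExtension ω a + psdExtension ω b := by
  obtain ⟨c, ⟨⟨hac, hbc⟩, habc⟩, hc⟩ := (((ha.eventually_isEffect_inv_smul.and
    hb.eventually_isEffect_inv_smul).and (ha.add hb).eventually_isEffect_inv_smul).and
    (eventually_gt_atTop 0)).exists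
  have hc' : (c : ℂ) ≠ 0 := by exact_mod_cast hc.ne'
  linear_combination hω.psdExtension_eq hc ⟨_, habc⟩ (smul_inv_smul₀ hc' _).symm
    - hω.psdExtension_eq hc ⟨_, hac⟩ (smul_inv_smul₀ hc' _).symm
    - hω.psdExtension_eq hc ⟨_, hbc⟩ (smul_inv_smul₀ hc' _).symm
    + c * hω.map_add (e := ⟨_, hac⟩) (f := ⟨_, hbc⟩) (g := ⟨_, habc⟩) (smul_add _ _ _)

theorem psdExtension_smul (hω : IsQState ω) {a : Matrix (Fin d) (Fin d) ℂ} (ha : a.PosSemidef)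
    {t : ℝ} (ht : 0 < t) : psdExtension ω ((t : ℂ) • a) = t * psdExtension ω a := by
  obtain ⟨c, hac, hc⟩ := (ha.eventually_isEffect_inv_smul.and (eventually_gt_atTop 0)).exists
  have hc' : (c : ℂ) ≠ 0 := by exact_mod_cast hc.ne'
  rw [hω.psdExtension_eq (mul_pos ht hc) ⟨_, hac⟩
      (by rw [Complex.ofReal_mul, mul_smul, smul_inv_smul₀ hc']),
    hω.psdExtension_eq hc ⟨_, hac⟩ (smul_inv_smul₀ hc' _).symm, mul_assoc]

theorem exists_trace_mul_eq_psdExtension (hω : IsQState ω) :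
    ∃ ρ : Matrix (Fin d) (Fin d) ℂ, ∀ a, a.PosSemidef → (ρ * a).trace = psdExtension ω a := by
  obtain ⟨L, hL⟩ := isReproducing_posSemidefCone.exists_linearMap_eqOn
    (fun h => psdExtension ω h)
    (fun x hx y hy => hω.psdExtension_add (mem_posSemidefCone.mp hx) (mem_posSemidefCone.mp hy))
    (fun c hc x hx => by
      simpa [← Complex.coe_smul] using hω.psdExtension_smul (mem_posSemidefCone.mp hx) hc)
  obtain ⟨ρ, hρ⟩ := exists_eq_trace_mul (Module.Dual.extendRCLike (𝕜 := ℂ) (L ∘ₗ realPart))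
  refine ⟨ρ, fun a ha => ?_⟩
  lift a to selfAdjoint (Matrix (Fin d) (Fin d) ℂ) using ha.1.isSelfAdjoint
  -- on a Hermitian `a` the complexification is just `L a`, since `ℜ (I • a) = -ℑ a = 0`
  rw [← hρ, Module.Dual.extendRCLike_apply]
  simpa [realPart_I_smul] using hL ha

end IsQState

/-- Gleason-type theorem for POVMs (Busch / Caves–Fuchs–Mannes–Renes): every
state on the effect algebra of a finite-dimensional complex Hilbert space is
`e ↦ tr (ρ e)` for a unique density operator `ρ`. -/
theorem qstate_eq_trace_density (d : ℕ) (ω : QEffect d → ℝ) (hω : IsQState ω) :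
    ∃! ρ : Matrix (Fin d) (Fin d) ℂ, ρ.PosSemidef ∧ ρ.trace = 1 ∧
      ∀ e : QEffect d, (ω e : ℂ) = (ρ * e.1).trace := by
  obtain ⟨ρ, hρ⟩ := hω.exists_trace_mul_eq_psdExtension
  have hρω : ∀ e : QEffect d, (ω e : ℂ) = (ρ * e.1).trace := fun e => by
    rw [hρ _ e.2.1, hω.psdExtension_effect]
  refine ⟨ρ, ⟨posSemidef_of_dotProduct_mulVec_nonneg fun x => ?_, ?_, hρω⟩, ?_⟩
  · have hx : star x ⬝ᵥ ρ *ᵥ x = (ρ * vecMulVec x (star x)).trace := by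
      rw [mul_vecMulVec, trace_vecMulVec, dotProduct_comm]
    rw [hx, hρ _ (posSemidef_vecMulVec_self_star x)]
    exact_mod_cast hω.psdExtension_nonneg _
  · let one : QEffect d := ⟨1, PosSemidef.one, by rw [sub_self]; exact PosSemidef.zero⟩
    have h1 := hρω one
    rw [hω.map_one rfl] at h1
    simpa [one] using h1.symm
  · rintro σ ⟨-, -, hσω⟩
    exact ext_of_trace_mul_isEffect fun a ha => by rw [← hσω ⟨a, ha⟩, hρω ⟨a, ha⟩]
end
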